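/- arXiv:1808.09821 — 7 statements merged into one kernel-verified Lean document; each statement's English description precedes it below -/
import Mathlib

section
/- Let H ∈ (1/2,1) and let V(s,t) := −2^{2H−1}(t^{2H} + s^{2H}) + (t+s)^{2H} + (t−s)^{2H} denote the incremental variance E|G^H(t)−G^H(s)|² of subfractional Brownian motion. Then for all 0 ≤ s ≤ t one has (2 − 2^{2H−1})(t−s)^{2H} ≤ V(s,t) ≤ (t−s)^{2H}; in particular subfractional Brownian motion satisfies condition (A) with constants C₁ = 2 − 2^{2H−1} and C₂ = 1. -/
/-! With `p = 2H ∈ (1, 2)` and `r = t - s` one has `V(s,t) = g(s) + r^p`, where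
`g(x) = (2x + r)^p - 2^{p-1}((x + r)^p + x^p)`. Midpoint convexity of `x ↦ x^p` gives `g ≤ 0`,
hence the upper bound. Midpoint concavity of `x ↦ x^{p-1}` makes `g' ≥ 0` on `[0, ∞)`, so
`g(s) ≥ g(0) = (1 - 2^{p-1}) r^p`, which is the lower bound. -/

open Set

lemma Real.rpow_add_le_two_rpow_sub_one_mul {p u v : ℝ} (hp : 1 ≤ p) (hu : 0 ≤ u)
    (hv : 0 ≤ v) :
    (u + v) ^ p ≤ 2 ^ (p - 1) * (u ^ p + v ^ p) := by
  exact_mod_cast NNReal.rpow_add_le_mul_rpow_add_rpow ⟨u, hu⟩ ⟨v, hv⟩ hp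

lemma Real.two_rpow_sub_one_mul_le_rpow_add {p u v : ℝ} (hp0 : 0 ≤ p) (hp1 : p ≤ 1)
    (hu : 0 ≤ u) (hv : 0 ≤ v) :
    2 ^ (p - 1) * (u ^ p + v ^ p) ≤ (u + v) ^ p := by
  have hmid : (u ^ p + v ^ p) / 2 ≤ ((u + v) / 2) ^ p := by
    have h := (Real.concaveOn_rpow hp0 hp1).2 (mem_Ici.2 hu) (mem_Ici.2 hv)
      (by norm_num : (0:ℝ) ≤ 1/2) (by norm_num : (0:ℝ) ≤ 1/2) (by norm_num)
    rw [smul_eq_mul, smul_eq_mul, smul_eq_mul, smul_eq_mul,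
      show (1 / 2 : ℝ) * u + 1 / 2 * v = (u + v) / 2 by ring] at h
    linarith
  calc 2 ^ (p - 1) * (u ^ p + v ^ p) = 2 ^ p * ((u ^ p + v ^ p) / 2) := by
        rw [Real.rpow_sub_one two_ne_zero]; ring
    _ ≤ 2 ^ p * ((u + v) / 2) ^ p := by gcongr
    _ = (u + v) ^ p := by
        rw [← Real.mul_rpow zero_le_two (by positivity)]; ring_nf

lemma monotoneOn_rpow_two_mul_add_sub {p r : ℝ} (hp1 : 1 ≤ p) (hp2 : p ≤ 2) (hr : 0 ≤ r) :
    MonotoneOn (fun x : ℝ ↦ (2 * x + r) ^ p - 2 ^ (p - 1) * ((x + r) ^ p + x ^ p)) (Ici 0) := by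
  have hderiv (x : ℝ) :
      HasDerivAt (fun x : ℝ ↦ (2 * x + r) ^ p - 2 ^ (p - 1) * ((x + r) ^ p + x ^ p))
      (2 * p * ((2 * x + r) ^ (p - 1) - 2 ^ (p - 2) * ((x + r) ^ (p - 1) + x ^ (p - 1)))) x := by
    have hlin : HasDerivAt (fun x : ℝ ↦ 2 * x + r) 2 x := by
      simpa using ((hasDerivAt_id x).const_mul 2).add_const r
    have hshift : HasDerivAt (fun x : ℝ ↦ x + r) 1 x := (hasDerivAt_id x).add_const r
    refine ((hlin.rpow_const (Or.inr hp1)).sub (((hshift.rpow_const (Or.inr hp1)).add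
      (Real.hasDerivAt_rpow_const (Or.inr hp1))).const_mul (2 ^ (p - 1)))).congr_deriv ?_
    have h2 : (2 : ℝ) ^ (p - 1) = 2 ^ (p - 2) * 2 := by
      rw [← Real.rpow_add_one two_ne_zero]; ring_nf
    rw [h2]; ring
  refine monotoneOn_of_hasDerivWithinAt_nonneg (convex_Ici 0)
    (fun x _ ↦ (hderiv x).continuousAt.continuousWithinAt)
    (fun x _ ↦ (hderiv x).hasDerivWithinAt) fun x hx ↦ ?_
  rw [interior_Ici, mem_Ioi] at hx
  have hconc := Real.two_rpow_sub_one_mul_le_rpow_add (p := p - 1) (u := x + r) (v := x)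
    (by linarith) (by linarith) (by linarith) hx.le
  rw [show x + r + x = 2 * x + r by ring, show p - 1 - 1 = p - 2 by ring] at hconc
  exact mul_nonneg (by linarith) (sub_nonneg.2 hconc)

lemma subfractional_variance_le {p s t : ℝ} (hp : 1 ≤ p) (hs : 0 ≤ s) (ht : 0 ≤ t) :
    -(2 : ℝ) ^ (p - 1) * (t ^ p + s ^ p) + (t + s) ^ p + (t - s) ^ p ≤ (t - s) ^ p := by
  have := Real.rpow_add_le_two_rpow_sub_one_mul hp ht hs
  linarith

lemma le_subfractional_variance {p s t : ℝ} (hp1 : 1 ≤ p) (hp2 : p ≤ 2) (hs : 0 ≤ s)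
    (hst : s ≤ t) :
    (2 - (2 : ℝ) ^ (p - 1)) * (t - s) ^ p ≤
      -(2 : ℝ) ^ (p - 1) * (t ^ p + s ^ p) + (t + s) ^ p + (t - s) ^ p := by
  have hmono := monotoneOn_rpow_two_mul_add_sub hp1 hp2 (sub_nonneg.2 hst)
    (mem_Ici.2 le_rfl) (mem_Ici.2 hs) hs
  simp only [mul_zero, zero_add, Real.zero_rpow (by linarith : p ≠ 0), add_zero,
    show 2 * s + (t - s) = t + s by ring, show s + (t - s) = t by ring] at hmono
  linarith

/-- The incremental variance
`V(s,t) = -2^{2H-1}(t^{2H} + s^{2H}) + (t+s)^{2H} + (t-s)^{2H}` of subfractional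
Brownian motion with `H ∈ (1/2,1)` satisfies, for `0 ≤ s ≤ t`,
`(2 - 2^{2H-1})(t-s)^{2H} ≤ V(s,t) ≤ (t-s)^{2H}`: condition (A) holds with
`C₁ = 2 - 2^{2H-1}` and `C₂ = 1`. -/
theorem subfractional_condition_A
    (H : ℝ) (hH : H ∈ Set.Ioo (1/2 : ℝ) 1)
    (V : ℝ → ℝ → ℝ)
    (hV : ∀ s t : ℝ, V s t =
      -(2 : ℝ) ^ (2 * H - 1) * (t ^ (2 * H) + s ^ (2 * H))
        + (t + s) ^ (2 * H) + (t - s) ^ (2 * H))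
    (s t : ℝ) (hs : 0 ≤ s) (hst : s ≤ t) :
    (2 - (2 : ℝ) ^ (2 * H - 1)) * (t - s) ^ (2 * H) ≤ V s t ∧
      V s t ≤ (t - s) ^ (2 * H) := by
  have hp1 : 1 ≤ 2 * H := by linarith [hH.1]
  have hp2 : 2 * H ≤ 2 := by linarith [hH.2]
  rw [hV]
  exact ⟨le_subfractional_variance hp1 hp2 hs hst,
    subfractional_variance_le hp1 hs (hs.trans hst)⟩
end

section
/- Let H ∈ (1/2,1) and R(t,s) := t^{2H} + s^{2H} − ((t+s)^{2H} + |t−s|^{2H})/2 be the covariance of subfractional Brownian motion. Then for all 0 ≤ s₁ ≤ t₁ ≤ s₂ ≤ t₂, the covariance of increments R(t₁,t₂) − R(t₁,s₂) − R(s₁,t₂) + R(s₁,s₂) is nonnegative; i.e., subfractional Brownian motion with H ∈ (1/2,1) satisfies condition (B). -/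
open Real Set

lemma concave_pair {β a b c d : ℝ} (hβ0 : 0 < β) (hβ1 : β < 1)
    (ha : 0 ≤ a) (hac : a ≤ c) (hcd : c ≤ d) (hdb : d ≤ b) (hsum : a + b = c + d) :
    a ^ β + b ^ β ≤ c ^ β + d ^ β := by
  rcases eq_or_lt_of_le (hac.trans (hcd.trans hdb)) with hab | hab
  · have hc : c = a := le_antisymm (by linarith) hac
    have hd : d = b := by linarith
    rw [hc, hd]
  · have hconc := (Real.strictConcaveOn_rpow hβ0 hβ1).concaveOn
    have hba : 0 < b - a := by linarith
    set l := (b - c) / (b - a) with hl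
    have hl0 : 0 ≤ l := div_nonneg (by linarith) hba.le
    have hl1 : l ≤ 1 := by rw [hl, div_le_one hba]; linarith
    have hb0 : 0 ≤ b := ha.trans hab.le
    have hc' : c = l * a + (1 - l) * b := by
      rw [hl]
      field_simp
      ring
    have hd' : d = (1 - l) * a + l * b := by linear_combination -hc' - hsum
    have h1 := hconc.2 (mem_Ici.mpr ha) (mem_Ici.mpr hb0) hl0 (by linarith) (show l + (1 - l) = 1 by ring)
    have h2 := hconc.2 (mem_Ici.mpr ha) (mem_Ici.mpr hb0) (by linarith : (0:ℝ) ≤ 1 - l) hl0 (show (1 - l) + l = 1 by ring)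
    simp only [smul_eq_mul] at h1 h2
    rw [← hc'] at h1
    rw [← hd'] at h2
    nlinarith [h1, h2]

/-- Subfractional Brownian motion with `H ∈ (1/2,1)`, whose covariance is
`R(t,s) = t^{2H} + s^{2H} - ((t+s)^{2H} + |t-s|^{2H})/2`, satisfies condition (B):
the covariance of increments over disjoint ordered intervals,
`R(t₁,t₂) - R(t₁,s₂) - R(s₁,t₂) + R(s₁,s₂)`, is nonnegative for
`0 ≤ s₁ ≤ t₁ ≤ s₂ ≤ t₂`. -/
theorem subfractional_condition_B
    (H : ℝ) (hH : H ∈ Set.Ioo (1/2 : ℝ) 1)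
    (R : ℝ → ℝ → ℝ)
    (hR : ∀ t s : ℝ, R t s =
      t ^ (2 * H) + s ^ (2 * H) - ((t + s) ^ (2 * H) + |t - s| ^ (2 * H)) / 2)
    (s₁ t₁ s₂ t₂ : ℝ) (h0 : 0 ≤ s₁) (h1 : s₁ ≤ t₁) (h2 : t₁ ≤ s₂) (h3 : s₂ ≤ t₂) :
    0 ≤ R t₁ t₂ - R t₁ s₂ - R s₁ t₂ + R s₁ s₂ := by
  obtain ⟨hH1, hH2⟩ := hH
  have hα1 : 1 < 2 * H := by linarith
  have hα2 : 2 * H < 2 := by linarith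
  have e1 : |t₁ - t₂| = t₂ - t₁ := by rw [abs_of_nonpos (by linarith)]; ring
  have e2 : |t₁ - s₂| = s₂ - t₁ := by rw [abs_of_nonpos (by linarith)]; ring
  have e3 : |s₁ - t₂| = t₂ - s₁ := by rw [abs_of_nonpos (by linarith)]; ring
  have e4 : |s₁ - s₂| = s₂ - s₁ := by rw [abs_of_nonpos (by linarith)]; ring
  rw [hR t₁ t₂, hR t₁ s₂, hR s₁ t₂, hR s₁ s₂, e1, e2, e3, e4]
  set f : ℝ → ℝ := fun x =>
    (t₁ + x) ^ (2 * H) + (x - t₁) ^ (2 * H)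
      - ((s₁ + x) ^ (2 * H) + (x - s₁) ^ (2 * H)) with hf
  have hderiv : ∀ x ∈ Set.Ioi t₁, HasDerivAt f
      (1 * (2 * H) * (t₁ + x) ^ (2 * H - 1) + 1 * (2 * H) * (x - t₁) ^ (2 * H - 1)
        - (1 * (2 * H) * (s₁ + x) ^ (2 * H - 1) + 1 * (2 * H) * (x - s₁) ^ (2 * H - 1))) x := by
    intro x _
    have d1 : HasDerivAt (fun x : ℝ => (t₁ + x) ^ (2 * H))
        (1 * (2 * H) * (t₁ + x) ^ (2 * H - 1)) x :=
      ((hasDerivAt_id x).const_add t₁).rpow_const (Or.inr hα1.le)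
    have d2 : HasDerivAt (fun x : ℝ => (x - t₁) ^ (2 * H))
        (1 * (2 * H) * (x - t₁) ^ (2 * H - 1)) x :=
      ((hasDerivAt_id x).sub_const t₁).rpow_const (Or.inr hα1.le)
    have d3 : HasDerivAt (fun x : ℝ => (s₁ + x) ^ (2 * H))
        (1 * (2 * H) * (s₁ + x) ^ (2 * H - 1)) x :=
      ((hasDerivAt_id x).const_add s₁).rpow_const (Or.inr hα1.le)
    have d4 : HasDerivAt (fun x : ℝ => (x - s₁) ^ (2 * H))
        (1 * (2 * H) * (x - s₁) ^ (2 * H - 1)) x :=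
      ((hasDerivAt_id x).sub_const s₁).rpow_const (Or.inr hα1.le)
    exact (d1.add d2).sub (d3.add d4)
  have hanti : AntitoneOn f (Set.Ici t₁) := by
    apply antitoneOn_of_deriv_nonpos (convex_Ici t₁)
    · apply Continuous.continuousOn
      have hc : ∀ c : ℝ, Continuous fun x : ℝ => (c + x) ^ (2 * H) :=
        fun c => (continuous_const.add continuous_id).rpow_const fun x => Or.inr (by positivity)
      have hc' : ∀ c : ℝ, Continuous fun x : ℝ => (x - c) ^ (2 * H) :=
        fun c => (continuous_id.sub continuous_const).rpow_const fun x => Or.inr (by positivity)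
      exact ((hc t₁).add (hc' t₁)).sub ((hc s₁).add (hc' s₁))
    · rw [interior_Ici]
      exact fun x hx => (hderiv x hx).differentiableAt.differentiableWithinAt
    · rw [interior_Ici]
      intro x hx
      rw [(hderiv x hx).deriv]
      have hx' : t₁ < x := hx
      have key : (x - t₁) ^ (2 * H - 1) + (t₁ + x) ^ (2 * H - 1)
          ≤ (x - s₁) ^ (2 * H - 1) + (s₁ + x) ^ (2 * H - 1) := by
        apply concave_pair (by linarith) (by linarith) (by linarith) (by linarith)
          (by linarith) (by linarith)
        ring
      nlinarith [key]
  have key : f t₂ ≤ f s₂ :=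
    hanti (Set.mem_Ici.mpr h2) (Set.mem_Ici.mpr (h2.trans h3)) h3
  simp only [hf] at key
  linarith
end

section
/- Let G be a centered square-integrable process on [a,b], let a = s₀ < s₁ < … < sₙ = b be the uniform partition with mesh δ = (b−a)/n, and set ξ_k := G(s_{k+1}) − G(s_k), k = 0,…,n−1. Assume (i) E[ξᵢξⱼ] ≥ 0 for all i,j, (ii) E[ξ_k²] ≤ C₂δ^{2H} for all k, and (iii) E[(G(b) − G(a))²] ≤ C₂(b−a)^{2H}, for some constants C₂ > 0 and H ∈ (1/2,1). Then ∑_{i,j=0}^{n−1} (E[ξᵢξⱼ])² ≤ C₂² δ^{2H} (b−a)^{2H}. -/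
/-!
Write `M = C₂ δ^{2H}` and `c i j = E[ξᵢξⱼ]`. From `ξᵢξⱼ ≤ (ξᵢ² + ξⱼ²)/2` and (ii), `c i j ≤ M`;
together with (i) this gives `(c i j)² ≤ M c i j`. Summing, `∑ c i j = E[(∑ ξₖ)²]`, and the
increments telescope to `G(b) − G(a)`, so (iii) bounds the total.
-/

open MeasureTheory

section SecondMoments

variable {Ω : Type*} {mΩ : MeasurableSpace Ω} {μ : Measure Ω}

lemma two_mul_integral_mul_le {f g : Ω → ℝ} (hf : MemLp f 2 μ) (hg : MemLp g 2 μ) :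
    2 * ∫ ω, f ω * g ω ∂μ ≤ (∫ ω, f ω ^ 2 ∂μ) + ∫ ω, g ω ^ 2 ∂μ := by
  rw [← integral_const_mul, ← integral_add hf.integrable_sq hg.integrable_sq]
  exact integral_mono ((hf.integrable_mul hg).const_mul 2)
    (hf.integrable_sq.add hg.integrable_sq) fun ω => by linarith [two_mul_le_add_sq (f ω) (g ω)]

lemma sum_sum_integral_mul_eq_integral_sq_sum {ι : Type*} [Fintype ι] {ξ : ι → Ω → ℝ}
    (hξ : ∀ k, MemLp (ξ k) 2 μ) :
    ∑ i, ∑ j, ∫ ω, ξ i ω * ξ j ω ∂μ = ∫ ω, (∑ k, ξ k ω) ^ 2 ∂μ := by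
  have hint : ∀ i j, Integrable (fun ω => ξ i ω * ξ j ω) μ :=
    fun i j => (hξ i).integrable_mul (hξ j)
  simp_rw [sq, Finset.sum_mul_sum]
  rw [integral_finsetSum _ fun i _ => integrable_finsetSum _ fun j _ => hint i j]
  exact Finset.sum_congr rfl fun i _ => (integral_finsetSum _ fun j _ => hint i j).symm

lemma sum_sum_sq_integral_mul_le {ι : Type*} [Fintype ι] {ξ : ι → Ω → ℝ} {M : ℝ}
    (hξ : ∀ k, MemLp (ξ k) 2 μ) (hpos : ∀ i j, 0 ≤ ∫ ω, ξ i ω * ξ j ω ∂μ)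
    (hvar : ∀ k, ∫ ω, ξ k ω ^ 2 ∂μ ≤ M) :
    ∑ i, ∑ j, (∫ ω, ξ i ω * ξ j ω ∂μ) ^ 2 ≤ M * ∫ ω, (∑ k, ξ k ω) ^ 2 ∂μ := by
  have hcov : ∀ i j, ∫ ω, ξ i ω * ξ j ω ∂μ ≤ M := fun i j => by
    linarith [two_mul_integral_mul_le (hξ i) (hξ j), hvar i, hvar j]
  calc ∑ i, ∑ j, (∫ ω, ξ i ω * ξ j ω ∂μ) ^ 2
      ≤ ∑ i, ∑ j, M * ∫ ω, ξ i ω * ξ j ω ∂μ := by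
        gcongr with i _ j _
        rw [sq]
        exact mul_le_mul_of_nonneg_right (hcov i j) (hpos i j)
    _ = M * ∫ ω, (∑ k, ξ k ω) ^ 2 ∂μ := by
        simp_rw [← Finset.mul_sum]
        rw [sum_sum_integral_mul_eq_integral_sq_sum hξ]

end SecondMoments

lemma sum_fin_uniform_increments {E : Type*} [AddCommGroup E] (G : ℝ → E) (a δ : ℝ) (n : ℕ) :
    ∑ k : Fin n, (G (a + ((k : ℕ) + 1) * δ) - G (a + (k : ℕ) * δ)) = G (a + n * δ) - G a := by
  rw [Fin.sum_univ_eq_sum_range (fun k : ℕ => G (a + ((k : ℝ) + 1) * δ) - G (a + k * δ)) n]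
  simpa using Finset.sum_range_sub (fun k : ℕ => G (a + k * δ)) n

theorem sum_sq_covariances_bound_general
    {Ω : Type*} {mΩ : MeasurableSpace Ω} (P : Measure Ω)
    (a b C₂ H : ℝ)
    (n : ℕ) (hn : 0 < n) (δ : ℝ) (hδ : δ = (b - a) / n)
    (G : ℝ → Ω → ℝ)
    (hL2 : ∀ k : ℕ, k ≤ n → MemLp (G (a + k * δ)) 2 P)
    (ξ : Fin n → Ω → ℝ)
    (hξ : ∀ k : Fin n, ξ k =
      fun ω => G (a + ((k : ℕ) + 1) * δ) ω - G (a + (k : ℕ) * δ) ω)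
    (hpos : ∀ i j, 0 ≤ ∫ ω, ξ i ω * ξ j ω ∂P)
    (hvar : ∀ k, ∫ ω, (ξ k ω) ^ 2 ∂P ≤ C₂ * δ ^ (2 * H))
    (htot : ∫ ω, (G b ω - G a ω) ^ 2 ∂P ≤ C₂ * (b - a) ^ (2 * H)) :
    ∑ i, ∑ j, (∫ ω, ξ i ω * ξ j ω ∂P) ^ 2 ≤ C₂ ^ 2 * δ ^ (2 * H) * (b - a) ^ (2 * H) := by
  have hξL2 : ∀ k, MemLp (ξ k) 2 P := fun k => by
    rw [hξ k]
    exact (by exact_mod_cast hL2 (k + 1) k.2 : MemLp (G (a + ((k : ℕ) + 1) * δ)) 2 P).sub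
      (hL2 k k.2.le)
  have hM : 0 ≤ C₂ * δ ^ (2 * H) :=
    (integral_nonneg fun ω => sq_nonneg (ξ ⟨0, hn⟩ ω)).trans (hvar ⟨0, hn⟩)
  have hend : a + n * δ = b := by
    rw [hδ]
    field_simp
    ring
  have htelescope : ∀ ω, ∑ k, ξ k ω = G b ω - G a ω := fun ω => by
    simpa only [hξ, hend] using sum_fin_uniform_increments (G · ω) a δ n
  calc ∑ i, ∑ j, (∫ ω, ξ i ω * ξ j ω ∂P) ^ 2
      ≤ C₂ * δ ^ (2 * H) * ∫ ω, (∑ k, ξ k ω) ^ 2 ∂P := sum_sum_sq_integral_mul_le hξL2 hpos hvar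
    _ ≤ C₂ * δ ^ (2 * H) * (C₂ * (b - a) ^ (2 * H)) := by
        simp_rw [htelescope]
        exact mul_le_mul_of_nonneg_left htot hM
    _ = C₂ ^ 2 * δ ^ (2 * H) * (b - a) ^ (2 * H) := by ring

/-- For a centered square-integrable process `G` on `[a,b]` and the increments
`ξ_k = G(s_{k+1}) - G(s_k)` over the uniform partition with mesh `δ = (b-a)/n`,
if the covariances `E[ξᵢξⱼ]` are nonnegative, `E[ξ_k²] ≤ C₂ δ^{2H}` and
`E[(G(b)-G(a))²] ≤ C₂ (b-a)^{2H}`, then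
`∑_{i,j} (E[ξᵢξⱼ])² ≤ C₂² δ^{2H} (b-a)^{2H}`. -/
theorem sum_sq_covariances_bound
    {Ω : Type*} {mΩ : MeasurableSpace Ω} (P : Measure Ω) [IsProbabilityMeasure P]
    (a b C₂ H : ℝ) (hab : a < b) (hC₂ : 0 < C₂) (hH : H ∈ Set.Ioo (1/2 : ℝ) 1)
    (n : ℕ) (hn : 0 < n) (δ : ℝ) (hδ : δ = (b - a) / n)
    (G : ℝ → Ω → ℝ)
    (hL2 : ∀ k : ℕ, k ≤ n → MemLp (G (a + k * δ)) 2 P)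
    (hcent : ∀ k : ℕ, k ≤ n → ∫ ω, G (a + k * δ) ω ∂P = 0)
    (ξ : Fin n → Ω → ℝ)
    (hξ : ∀ k : Fin n, ξ k =
      fun ω => G (a + ((k : ℕ) + 1) * δ) ω - G (a + (k : ℕ) * δ) ω)
    (hpos : ∀ i j, 0 ≤ ∫ ω, ξ i ω * ξ j ω ∂P)
    (hvar : ∀ k, ∫ ω, (ξ k ω) ^ 2 ∂P ≤ C₂ * δ ^ (2 * H))
    (htot : ∫ ω, (G b ω - G a ω) ^ 2 ∂P ≤ C₂ * (b - a) ^ (2 * H)) :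
    ∑ i, ∑ j, (∫ ω, ξ i ω * ξ j ω ∂P) ^ 2 ≤ C₂ ^ 2 * δ ^ (2 * H) * (b - a) ^ (2 * H) :=
  sum_sq_covariances_bound_general (mΩ := mΩ) P a b C₂ H n hn δ hδ G hL2 ξ hξ hpos hvar htot
end

section
/- Let (Ω,F,P) be a probability space, φ : Ω → ℝ measurable with φ > 0 a.s., u : ℝ → ℝ strictly concave and differentiable, c a real constant, and X* : Ω → ℝ with u'(X*) = cφ a.s. If X : Ω → ℝ satisfies the budget constraint E[φX] = E[φX*] (with φX, φX*, u(X), u(X*) integrable) and achieves E[u(X)] = E[u(X*)], then X = X* almost surely; i.e., the expected-utility maximizer under the budget constraint is unique. -/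
open MeasureTheory

/-- Tangent line inequality for strictly concave differentiable functions. -/
lemma tangent_lt {u : ℝ → ℝ} (hu : StrictConcaveOn ℝ Set.univ u)
    (hdiff : Differentiable ℝ u) {x y : ℝ} (hxy : x ≠ y) :
    u y < u x + deriv u x * (y - x) := by
  rcases lt_or_gt_of_ne hxy with h | h
  · have := hu.slope_lt_deriv (Set.mem_univ x) (Set.mem_univ y) h (hdiff x)
    rw [slope_def_field, div_lt_iff₀ (by linarith)] at this
    linarith
  · have := hu.deriv_lt_slope (Set.mem_univ y) (Set.mem_univ x) h (hdiff x)
    rw [slope_def_field, lt_div_iff₀ (by linarith)] at this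
    linarith

lemma tangent_le {u : ℝ → ℝ} (hu : StrictConcaveOn ℝ Set.univ u)
    (hdiff : Differentiable ℝ u) (x y : ℝ) :
    u y ≤ u x + deriv u x * (y - x) := by
  rcases eq_or_ne x y with rfl | h
  · simp
  · exact (tangent_lt hu hdiff h).le

/-- Uniqueness of the expected-utility maximizer: if `u` is strictly concave and
differentiable, `φ > 0` a.s., `X*` satisfies the first-order condition
`u'(X*) = cφ` a.s., and `X` satisfies the budget constraint `E[φX] = E[φX*]` and
attains the same expected utility `E[u(X)] = E[u(X*)]`, then `X = X*` a.s. -/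
theorem expected_utility_maximizer_unique
    {Ω : Type*} {mΩ : MeasurableSpace Ω} (P : Measure Ω) [IsProbabilityMeasure P]
    (φ : Ω → ℝ) (hφmeas : Measurable φ) (hφpos : ∀ᵐ ω ∂P, 0 < φ ω)
    (u : ℝ → ℝ) (hu : StrictConcaveOn ℝ Set.univ u) (hdiff : Differentiable ℝ u)
    (c : ℝ) (Xstar : Ω → ℝ)
    (hfoc : ∀ᵐ ω ∂P, deriv u (Xstar ω) = c * φ ω)
    (X : Ω → ℝ)
    (hint1 : Integrable (fun ω => φ ω * X ω) P)
    (hint2 : Integrable (fun ω => φ ω * Xstar ω) P)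
    (hint3 : Integrable (fun ω => u (X ω)) P)
    (hint4 : Integrable (fun ω => u (Xstar ω)) P)
    (hbudget : ∫ ω, φ ω * X ω ∂P = ∫ ω, φ ω * Xstar ω ∂P)
    (hopt : ∫ ω, u (X ω) ∂P = ∫ ω, u (Xstar ω) ∂P) :
    ∀ᵐ ω ∂P, X ω = Xstar ω := by
  set g : Ω → ℝ := fun ω =>
    u (Xstar ω) + c * (φ ω * X ω - φ ω * Xstar ω) - u (X ω) with hg
  have hgint : Integrable g P := by
    exact ((hint4.add ((hint1.sub hint2).const_mul c)).sub hint3)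
  have hgnonneg : 0 ≤ᵐ[P] g := by
    filter_upwards [hfoc] with ω hω
    have := tangent_le hu hdiff (Xstar ω) (X ω)
    simp only [hg, Pi.zero_apply]
    rw [hω] at this
    nlinarith [this]
  have hsub : Integrable (fun ω => φ ω * X ω - φ ω * Xstar ω) P := hint1.sub hint2
  have hcm : Integrable (fun ω => c * (φ ω * X ω - φ ω * Xstar ω)) P := hsub.const_mul c
  have hA : Integrable (fun ω => u (Xstar ω) + c * (φ ω * X ω - φ ω * Xstar ω)) P :=
    hint4.add hcm
  have hgzero : ∫ ω, g ω ∂P = 0 := by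
    have : (∫ ω, g ω ∂P)
        = (∫ ω, u (Xstar ω) ∂P) + c * ((∫ ω, φ ω * X ω ∂P) - ∫ ω, φ ω * Xstar ω ∂P)
          - ∫ ω, u (X ω) ∂P := by
      rw [hg, integral_sub hA hint3, integral_add hint4 hcm, integral_const_mul,
        integral_sub hint1 hint2]
    rw [this, hbudget, hopt]; ring
  have hgae : g =ᵐ[P] 0 := by
    have := (integral_eq_zero_iff_of_nonneg_ae hgnonneg hgint).mp hgzero
    exact this
  filter_upwards [hfoc, hgae, hφpos] with ω hω hzero hpos
  by_contra hne
  have hlt := tangent_lt hu hdiff (x := Xstar ω) (y := X ω) (Ne.symm hne)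
  rw [hω] at hlt
  simp only [hg, Pi.zero_apply] at hzero
  nlinarith [hlt]
end

section
/- Let (Ω,F,P) be a probability space, w > 0, and φ : Ω → ℝ measurable with φ > 0 a.s., E[φ] = 1, and E[|log φ|] < ∞; set h := −E[log φ] (the relative entropy H(P|P*)). Define X* := w/φ. Then: (i) E[φX*] = w; (ii) E[log X*] = log w + h; and (iii) for every measurable X : Ω → ℝ with X > 0 a.s., φX integrable, E[φX] = w, and log X integrable, one has E[log X] ≤ log w + h. Thus X* is the optimal profile for logarithmic utility under the budget constraint E[φX] = w. -/
open MeasureTheory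

/-- Optimal profile for logarithmic utility: with a pricing density `φ > 0`,
`E[φ] = 1`, `E[|log φ|] < ∞` and `h = -E[log φ]` (the relative entropy `H(P|P*)`),
the profile `X* = w/φ` satisfies the budget constraint `E[φX*] = w`, attains
expected utility `log w + h`, and maximizes `E[log X]` over the budget set
`{X > 0 : E[φX] = w}`. -/
theorem log_utility_optimal_profile
    {Ω : Type*} {mΩ : MeasurableSpace Ω} (P : Measure Ω) [IsProbabilityMeasure P]
    (w : ℝ) (hw : 0 < w)
    (φ : Ω → ℝ) (hφmeas : Measurable φ) (hφpos : ∀ᵐ ω ∂P, 0 < φ ω)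
    (hφL1 : Integrable φ P) (hφ1 : ∫ ω, φ ω ∂P = 1)
    (hφlog : Integrable (fun ω => |Real.log (φ ω)|) P)
    (h : ℝ) (hh : h = -∫ ω, Real.log (φ ω) ∂P)
    (Xstar : Ω → ℝ) (hXstar : Xstar = fun ω => w / φ ω) :
    (∫ ω, φ ω * Xstar ω ∂P = w) ∧
    (∫ ω, Real.log (Xstar ω) ∂P = Real.log w + h) ∧
    (∀ X : Ω → ℝ, Measurable X → (∀ᵐ ω ∂P, 0 < X ω) →
      Integrable (fun ω => φ ω * X ω) P → (∫ ω, φ ω * X ω ∂P = w) →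
      Integrable (fun ω => Real.log (X ω)) P →
      ∫ ω, Real.log (X ω) ∂P ≤ Real.log w + h) := by
  have hlogφ : Integrable (fun ω => Real.log (φ ω)) P :=
    hφlog.mono' (hφmeas.log.aestronglyMeasurable)
      (Filter.Eventually.of_forall fun ω => by simp [Real.norm_eq_abs])
  have h1 : ∫ ω, φ ω * Xstar ω ∂P = w := by
    have : (fun ω => φ ω * Xstar ω) =ᵐ[P] fun _ => w := by
      filter_upwards [hφpos] with ω hω
      simp only [hXstar]
      field_simp
    rw [integral_congr_ae this, integral_const]
    simp
  refine ⟨h1, ?_, ?_⟩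
  · have : (fun ω => Real.log (Xstar ω)) =ᵐ[P] fun ω => Real.log w - Real.log (φ ω) := by
      filter_upwards [hφpos] with ω hω
      simp [hXstar, Real.log_div hw.ne' hω.ne']
    rw [integral_congr_ae this, integral_sub (integrable_const _) hlogφ, integral_const]
    simp [hh]
    ring
  · intro X hXmeas hXpos hφXL1 hφXw hlogX
    have key : (fun ω => Real.log (X ω)) ≤ᵐ[P]
        fun ω => Real.log w - Real.log (φ ω) + (φ ω * X ω) / w - 1 := by
      filter_upwards [hφpos, hXpos] with ω hφω hXω
      have hq : 0 < φ ω * X ω / w := by positivity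
      have h2 : Real.log (φ ω * X ω / w) ≤ φ ω * X ω / w - 1 :=
        Real.log_le_sub_one_of_pos hq
      have h3 : Real.log (X ω) =
          Real.log w - Real.log (φ ω) + Real.log (φ ω * X ω / w) := by
        rw [Real.log_div (by positivity) hw.ne', Real.log_mul hφω.ne' hXω.ne']
        ring
      linarith
    have hrhs : Integrable (fun ω => Real.log w - Real.log (φ ω) + (φ ω * X ω) / w - 1) P := by
      exact (((integrable_const _).sub hlogφ).add (hφXL1.div_const w)).sub (integrable_const _)
    have := integral_mono_ae hlogX hrhs key
    have hA : Integrable (fun ω => Real.log w - Real.log (φ ω)) P := (integrable_const _).sub hlogφ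
    have hB : Integrable (fun ω => φ ω * X ω / w) P := hφXL1.div_const w
    have hAB : Integrable (fun ω => Real.log w - Real.log (φ ω) + φ ω * X ω / w) P := hA.add hB
    rw [integral_sub hAB (integrable_const 1), integral_add hA hB,
        integral_sub (integrable_const _) hlogφ, integral_const, integral_const,
        integral_div, hφXw] at this
    simp at this
    rw [hh]
    have hdiv : w / w = 1 := div_self hw.ne'
    linarith
end

section
/- For every H ∈ (1/2,1) and every t > 0, ∫₀ᵗ [ s^{1/2−H} t^{H−1/2} (t−s)^{1/2−H} − (H−1/2) s^{1/2−H} ∫ₛᵗ u^{H−3/2} (u−s)^{1/2−H} du ] ds = ( Γ(3/2−H)² / ( (3/2−H) Γ(2−2H) ) ) · t^{3/2−H}. -/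
open intervalIntegral
open MeasureTheory Set Filter

lemma rpow_mul_rpow_intervalIntegrable {p q : ℝ} (hp : -1 < p) (hq : -1 < q) {x : ℝ}
    (hx : 0 < x) :
    IntervalIntegrable (fun s => s ^ p * (x - s) ^ q) volume 0 x := by
  have h1 : IntervalIntegrable (fun s => s ^ p * (x - s) ^ q) volume 0 (x / 2) := by
    apply (intervalIntegrable_rpow' hp).mul_continuousOn
    intro s hs
    apply ContinuousAt.continuousWithinAt
    have hxs : x - s ≠ 0 := by
      rw [Set.uIcc_of_le (by linarith)] at hs
      intro h; nlinarith [hs.1, hs.2]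
    exact (Real.continuousAt_rpow_const _ _ (Or.inl hxs)).comp (by fun_prop)
  have h2 : IntervalIntegrable (fun s => s ^ p * (x - s) ^ q) volume (x / 2) x := by
    have base : IntervalIntegrable (fun s => (x - s) ^ q) volume (x / 2) x := by
      have := (intervalIntegrable_rpow' hq (a := x / 2) (b := 0)).comp_sub_left x
      simpa [show x - x / 2 = x / 2 from by ring] using this
    apply base.continuousOn_mul
    intro s hs
    apply ContinuousAt.continuousWithinAt
    have hs0 : s ≠ 0 := by
      rw [Set.uIcc_of_le (by linarith)] at hs
      intro h; nlinarith [hs.1, hs.2]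
    exact Real.continuousAt_rpow_const _ _ (Or.inl hs0)
  exact h1.trans h2

lemma beta_rpow_integral {a b : ℝ} (ha : -1 < a) (hb : -1 < b) {x : ℝ} (hx : 0 < x) :
    ∫ s in (0:ℝ)..x, s ^ a * (x - s) ^ b
      = Real.Gamma (a + 1) * Real.Gamma (b + 1) / Real.Gamma (a + b + 2) * x ^ (a + b + 1) := by
  have key := Complex.betaIntegral_scaled ((a : ℂ) + 1) ((b : ℂ) + 1) hx
  have hre : ∫ s in (0:ℝ)..x, ((s ^ a * (x - s) ^ b : ℝ) : ℂ)
      = ∫ s in (0:ℝ)..x, (s : ℂ) ^ ((a : ℂ) + 1 - 1) * ((x : ℂ) - s) ^ ((b : ℂ) + 1 - 1) := by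
    refine intervalIntegral.integral_congr fun s hs => ?_
    rw [Set.uIcc_of_le hx.le] at hs
    rw [add_sub_cancel_right, add_sub_cancel_right, Complex.ofReal_mul,
      Complex.ofReal_cpow hs.1 a, Complex.ofReal_cpow (by linarith [hs.2] : (0:ℝ) ≤ x - s) b,
      Complex.ofReal_sub]
  have hne : Complex.Gamma ((a : ℂ) + 1 + ((b : ℂ) + 1)) ≠ 0 := by
    have h2 : ((a : ℂ) + 1 + ((b : ℂ) + 1)) = ((a + b + 2 : ℝ) : ℂ) := by push_cast; ring
    rw [h2, Complex.Gamma_ofReal]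
    exact_mod_cast (Real.Gamma_pos_of_pos (by linarith)).ne'
  have hG : ∀ r : ℝ, ((Real.Gamma r : ℝ) : ℂ) = Complex.Gamma (r : ℂ) := fun r =>
      (Complex.Gamma_ofReal r).symm
  have hgamma : Complex.betaIntegral ((a : ℂ) + 1) ((b : ℂ) + 1)
      = ((Real.Gamma (a + 1) * Real.Gamma (b + 1) / Real.Gamma (a + b + 2) : ℝ) : ℂ) := by
    have h1 := Complex.Gamma_mul_Gamma_eq_betaIntegral
      (s := (a : ℂ) + 1) (t := (b : ℂ) + 1) (by simp; linarith) (by simp; linarith)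
    rw [Complex.ofReal_div, Complex.ofReal_mul, hG, hG, hG,
      eq_div_iff (by rw [← hG]; exact_mod_cast
        (Real.Gamma_pos_of_pos (by linarith : (0:ℝ) < a + b + 2)).ne')]
    push_cast
    rw [show ((a:ℂ) + b + 2) = ((a:ℂ) + 1 + ((b:ℂ) + 1)) from by ring, h1]
    ring
  have hx' : ((x : ℂ)) ^ ((a : ℂ) + 1 + ((b : ℂ) + 1) - 1) = ((x ^ (a + b + 1) : ℝ) : ℂ) := by
    rw [Complex.ofReal_cpow hx.le]
    push_cast; ring_nf
  have final : ((∫ s in (0:ℝ)..x, s ^ a * (x - s) ^ b : ℝ) : ℂ)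
      = ((Real.Gamma (a + 1) * Real.Gamma (b + 1) / Real.Gamma (a + b + 2)
          * x ^ (a + b + 1) : ℝ) : ℂ) := by
    rw [← intervalIntegral.integral_ofReal, hre, key, hgamma, hx', ← Complex.ofReal_mul]
    push_cast; ring
  exact_mod_cast final

lemma fubini_key {p t : ℝ} (hp1 : -(1:ℝ)/2 < p) (hp0 : p < 0) (ht : 0 < t) :
    IntervalIntegrable (fun s => s ^ p * ∫ u in s..t, u ^ (-1 - p) * (u - s) ^ p) volume 0 t ∧
    ∫ s in (0:ℝ)..t, s ^ p * ∫ u in s..t, u ^ (-1 - p) * (u - s) ^ p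
      = Real.Gamma (p + 1) ^ 2 / Real.Gamma (2 * p + 2) * t ^ (p + 1) / (p + 1) := by
  have hp : -1 < p := by linarith
  have hq : -1 < -1 - p := by linarith
  set C : ℝ := Real.Gamma (p + 1) ^ 2 / Real.Gamma (2 * p + 2) with hC
  set μ : Measure ℝ := volume.restrict (Set.Ioc 0 t) with hμ
  set F : ℝ × ℝ → ℝ :=
    fun z => if z.2 < z.1 then z.2 ^ p * (z.1 ^ (-1 - p) * (z.1 - z.2) ^ p) else 0 with hF
  have hFmeas : Measurable F := by
    apply Measurable.ite (measurableSet_lt measurable_snd measurable_fst)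
    · exact (measurable_snd.pow measurable_const).mul
        ((measurable_fst.pow measurable_const).mul
          ((measurable_fst.sub measurable_snd).pow measurable_const))
    · exact measurable_const
  have hFeq : ∀ u : ℝ, (fun s => F (u, s))
      = Set.indicator (Set.Iio u) (fun s => s ^ p * (u ^ (-1 - p) * (u - s) ^ p)) := by
    intro u; ext s; simp only [hF, Set.indicator_apply, Set.mem_Iio]
  have hFeq2 : ∀ s : ℝ, (fun u => F (u, s))
      = Set.indicator (Set.Ioi s) (fun u => s ^ p * (u ^ (-1 - p) * (u - s) ^ p)) := by
    intro s; ext u; simp only [hF, Set.indicator_apply, Set.mem_Ioi]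
  have hset : ∀ u ∈ Set.Ioc (0:ℝ) t, Set.Ioc 0 t ∩ Set.Iio u = Set.Ioo 0 u := by
    intro u hu; ext s
    constructor
    · rintro ⟨⟨h1, _⟩, h3⟩; exact ⟨h1, h3⟩
    · rintro ⟨h1, h2⟩; exact ⟨⟨h1, le_trans h2.le hu.2⟩, h2⟩
  have hsec : ∀ u ∈ Set.Ioc (0:ℝ) t, Integrable (fun s => F (u, s)) μ := by
    intro u hu
    rw [hFeq u, hμ, integrable_indicator_iff measurableSet_Iio, IntegrableOn,
      Measure.restrict_restrict measurableSet_Iio, Set.inter_comm, hset u hu]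
    have base := (((rpow_mul_rpow_intervalIntegrable hp hp hu.1).1.mono_set
      Set.Ioo_subset_Ioc_self).const_mul (u ^ (-1 - p)))
    exact base.congr (Eventually.of_forall fun s => by ring)
  have hinner : ∀ u ∈ Set.Ioc (0:ℝ) t, ∫ s, F (u, s) ∂μ = C * u ^ p := by
    intro u hu
    rw [hFeq u, hμ, setIntegral_indicator measurableSet_Iio, hset u hu]
    have hrw : ∀ s : ℝ, s ^ p * (u ^ (-1 - p) * (u - s) ^ p)
        = u ^ (-1 - p) * (s ^ p * (u - s) ^ p) := fun s => by ring
    simp_rw [hrw]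
    rw [MeasureTheory.integral_const_mul, ← MeasureTheory.integral_Ioc_eq_integral_Ioo,
      ← intervalIntegral.integral_of_le hu.1.le, beta_rpow_integral hp hp hu.1]
    have hupow : u ^ (-1 - p) * u ^ (p + p + 1) = u ^ p := by
      rw [← Real.rpow_add hu.1]; congr 1; ring
    have hGam : Real.Gamma (p + 1) * Real.Gamma (p + 1) / Real.Gamma (p + p + 2) = C := by
      rw [hC, sq]; congr 2; ring
    rw [mul_left_comm, hupow, hGam]
  have hnormint : ∀ u ∈ Set.Ioc (0:ℝ) t, ∫ s, ‖F (u, s)‖ ∂μ = C * u ^ p := by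
    intro u hu
    rw [← hinner u hu, hμ]
    refine setIntegral_congr_fun measurableSet_Ioc fun s hs => ?_
    rw [Real.norm_of_nonneg]
    by_cases h : s < u
    · simp only [hF, if_pos h]
      exact mul_nonneg (Real.rpow_nonneg hs.1.le _)
        (mul_nonneg (Real.rpow_nonneg (le_trans hs.1.le h.le) _)
          (Real.rpow_nonneg (by linarith) _))
    · simp [hF, if_neg h]
  have hFint : Integrable F (μ.prod μ) := by
    refine (integrable_prod_iff hFmeas.aestronglyMeasurable).2 ⟨?_, ?_⟩
    · rw [hμ]
      exact (ae_restrict_iff' measurableSet_Ioc).2 (Eventually.of_forall hsec)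
    · have hint : IntegrableOn (fun u => C * u ^ p) (Set.Ioc 0 t) volume :=
        ((intervalIntegrable_rpow' hp (a := 0) (b := t)).const_mul C).1
      refine hint.congr ?_
      rw [hμ]
      exact (ae_restrict_iff' measurableSet_Ioc).2
        (Eventually.of_forall fun u hu => (hnormint u hu).symm)
  have hswap := MeasureTheory.integral_integral_swap (f := fun u s => F (u, s))
    (μ := μ) (ν := μ) hFint
  have hLHS : ∫ u, (∫ s, F (u, s) ∂μ) ∂μ = C * t ^ (p + 1) / (p + 1) := by
    rw [hμ]
    rw [setIntegral_congr_fun measurableSet_Ioc fun u hu => hinner u hu]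
    rw [← intervalIntegral.integral_of_le ht.le, intervalIntegral.integral_const_mul,
      integral_rpow (Or.inl hp), Real.zero_rpow (by linarith : p + 1 ≠ 0)]
    ring
  have hRHS_ae : ∀ s ∈ Set.Ioo (0:ℝ) t, (∫ u, F (u, s) ∂μ)
      = s ^ p * ∫ u in s..t, u ^ (-1 - p) * (u - s) ^ p := by
    intro s hs
    rw [hFeq2 s, hμ, setIntegral_indicator measurableSet_Ioi]
    have hset2 : Set.Ioc 0 t ∩ Set.Ioi s = Set.Ioc s t := by
      ext u; constructor
      · rintro ⟨⟨_, h2⟩, h3⟩; exact ⟨h3, h2⟩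
      · rintro ⟨h1, h2⟩; exact ⟨⟨lt_trans hs.1 h1, h2⟩, h1⟩
    rw [hset2, ← intervalIntegral.integral_of_le hs.2.le,
      ← intervalIntegral.integral_const_mul]
  have hne_t : ∀ᵐ s : ℝ ∂μ, s ≠ t := by
    rw [hμ]
    refine ae_restrict_of_ae ?_
    rw [MeasureTheory.ae_iff]
    have : {x : ℝ | ¬ x ≠ t} = {t} := by ext x; simp
    rw [this]
    exact measure_singleton t
  have hae : (fun s => ∫ u, F (u, s) ∂μ)
      =ᵐ[μ] (fun s => s ^ p * ∫ u in s..t, u ^ (-1 - p) * (u - s) ^ p) := by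
    have hmem : ∀ᵐ s ∂μ, s ∈ Set.Ioc 0 t := by
      rw [hμ]; exact ae_restrict_mem measurableSet_Ioc
    filter_upwards [hmem, hne_t] with s hs hst
    exact hRHS_ae s ⟨hs.1, lt_of_le_of_ne hs.2 hst⟩
  have hg : Integrable (fun s => s ^ p * ∫ u in s..t, u ^ (-1 - p) * (u - s) ^ p) μ :=
    hFint.integral_prod_right.congr hae
  constructor
  · constructor
    · exact hg
    · rw [Set.Ioc_eq_empty (by linarith : ¬ t < 0)]
      exact integrableOn_empty
  · rw [intervalIntegral.integral_of_le ht.le]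
    calc ∫ s in Set.Ioc 0 t, s ^ p * ∫ u in s..t, u ^ (-1 - p) * (u - s) ^ p
        = ∫ s, (∫ u, F (u, s) ∂μ) ∂μ := (integral_congr_ae hae).symm
      _ = ∫ u, (∫ s, F (u, s) ∂μ) ∂μ := hswap.symm
      _ = C * t ^ (p + 1) / (p + 1) := hLHS

/-- The key drift computation for fractional Brownian motion with `H ∈ (1/2,1)`:
`∫₀ᵗ [s^{1/2-H} t^{H-1/2} (t-s)^{1/2-H}
      - (H-1/2) s^{1/2-H} ∫ₛᵗ u^{H-3/2} (u-s)^{1/2-H} du] ds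
  = (Γ(3/2-H)² / ((3/2-H) Γ(2-2H))) t^{3/2-H}`. -/
theorem fbm_drift_kernel_integral
    (H : ℝ) (hH : H ∈ Set.Ioo (1/2 : ℝ) 1) (t : ℝ) (ht : 0 < t) :
    ∫ s in (0:ℝ)..t,
        (s ^ ((1:ℝ)/2 - H) * t ^ (H - (1:ℝ)/2) * (t - s) ^ ((1:ℝ)/2 - H)
          - (H - 1/2) * s ^ ((1:ℝ)/2 - H) *
              ∫ u in s..t, u ^ (H - (3:ℝ)/2) * (u - s) ^ ((1:ℝ)/2 - H))
      = Real.Gamma (3/2 - H) ^ 2 / ((3/2 - H) * Real.Gamma (2 - 2*H))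
          * t ^ ((3:ℝ)/2 - H) := by
  obtain ⟨hH1, hH2⟩ := hH
  have hp1 : -(1:ℝ)/2 < (1:ℝ)/2 - H := by linarith
  have hp0 : (1:ℝ)/2 - H < 0 := by linarith
  have hp : (-1:ℝ) < (1:ℝ)/2 - H := by linarith
  have hkey := fubini_key hp1 hp0 ht
  rw [show H - (3:ℝ)/2 = -1 - ((1:ℝ)/2 - H) from by ring]
  have hrw : ∀ s : ℝ,
      s ^ ((1:ℝ)/2 - H) * t ^ (H - (1:ℝ)/2) * (t - s) ^ ((1:ℝ)/2 - H)
        - (H - 1/2) * s ^ ((1:ℝ)/2 - H) *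
            (∫ u in s..t, u ^ (-1 - ((1:ℝ)/2 - H)) * (u - s) ^ ((1:ℝ)/2 - H))
      = t ^ (H - (1:ℝ)/2) * (s ^ ((1:ℝ)/2 - H) * (t - s) ^ ((1:ℝ)/2 - H))
        - (H - 1/2) * (s ^ ((1:ℝ)/2 - H) *
            ∫ u in s..t, u ^ (-1 - ((1:ℝ)/2 - H)) * (u - s) ^ ((1:ℝ)/2 - H)) :=
    fun s => by ring
  simp_rw [hrw]
  rw [intervalIntegral.integral_sub
    ((rpow_mul_rpow_intervalIntegrable hp hp ht).const_mul _) (hkey.1.const_mul _),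
    intervalIntegral.integral_const_mul, intervalIntegral.integral_const_mul,
    beta_rpow_integral hp hp ht, hkey.2]
  have hGam : Real.Gamma (2 * ((1:ℝ)/2 - H) + 2) = (2 - 2*H) * Real.Gamma (2 - 2*H) := by
    rw [show 2 * ((1:ℝ)/2 - H) + 2 = (2 - 2*H) + 1 from by ring,
      Real.Gamma_add_one (by linarith)]
  have hpow : t ^ (H - (1:ℝ)/2) * t ^ (((1:ℝ)/2 - H) + ((1:ℝ)/2 - H) + 1)
      = t ^ ((3:ℝ)/2 - H) := by
    rw [← Real.rpow_add ht]; congr 1; ring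
  have e1 : ((1:ℝ)/2 - H) + ((1:ℝ)/2 - H) + 2 = 2 * ((1:ℝ)/2 - H) + 2 := by ring
  have e2 : ((1:ℝ)/2 - H) + 1 = (3:ℝ)/2 - H := by ring
  rw [e1, e2, hGam, mul_left_comm, hpow]
  have hG2 : Real.Gamma (2 - 2*H) ≠ 0 := (Real.Gamma_pos_of_pos (by linarith)).ne'
  have h1 : (2:ℝ) - 2*H ≠ 0 := by linarith
  have h2 : (3:ℝ)/2 - H ≠ 0 := by linarith
  have hcoef : ∀ G K a b : ℝ, K ≠ 0 → a ≠ 0 → b ≠ 0 →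
      G * G / (a * K) - (b - a) * (G ^ 2 / (a * K) / b) = G ^ 2 / (b * K) := by
    intro G K a b hK ha hb
    field_simp
    ring
  have hc := hcoef (Real.Gamma ((3:ℝ)/2 - H)) (Real.Gamma (2 - 2*H)) (2 - 2*H)
    ((3:ℝ)/2 - H) hG2 h1 h2
  linear_combination t ^ ((3:ℝ)/2 - H) * hc
end

section
/- Let T > 0, δ ∈ (0,T), r ∈ [0,1/2), H ∈ (1/2,1), and let K : {(t,s) : 0 < s ≤ t ≤ T} → ℝ be measurable and satisfy, for constants D₂, D₃ > 0: |K(t₂,s) − K(t₁,s)| ≤ D₂|t₂−t₁|^H s^{−r} for all 0 < s ≤ t₁ ≤ t₂ ≤ T, and 0 ≤ K(t,s) ≤ D₃(t−s)^{H−1/2} s^{−r} for all 0 < s < t ≤ T. Then there exists a constant C₂ > 0 (depending only on D₂, D₃, H, r, T, δ) such that for all T−δ ≤ t₁ ≤ t₂ ≤ T: ∫₀^{t₁} (K(t₂,s) − K(t₁,s))² ds + ∫_{t₁}^{t₂} K(t₂,s)² ds ≤ C₂ (t₂−t₁)^{2H}. -/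
open intervalIntegral MeasureTheory

/-- Upper bound of condition (A) for Volterra kernels: if `K` satisfies the
regularity conditions (B2), i.e.
`|K(t₂,s) - K(t₁,s)| ≤ D₂|t₂-t₁|^H s^{-r}` and `0 ≤ K(t,s) ≤ D₃(t-s)^{H-1/2}s^{-r}`,
then there is a constant `C₂ > 0`, depending only on `D₂, D₃, H, r, T, δ`, such
that for all `T - δ ≤ t₁ ≤ t₂ ≤ T`,
`∫₀^{t₁}(K(t₂,s) - K(t₁,s))² ds + ∫_{t₁}^{t₂} K(t₂,s)² ds ≤ C₂ (t₂-t₁)^{2H}`;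
by the Itô isometry this is the bound `E|G(t₂)-G(t₁)|² ≤ C₂|t₂-t₁|^{2H}` for the
Volterra Gaussian process `G(t) = ∫₀ᵗ K(t,s) dW(s)` on `[T-δ, T]`. -/
theorem volterra_kernel_condition_A_upper
    (T δ r H D₂ D₃ : ℝ) (hT : 0 < T) (hδ : δ ∈ Set.Ioo (0:ℝ) T)
    (hr : r ∈ Set.Ico (0:ℝ) (1/2)) (hH : H ∈ Set.Ioo (1/2:ℝ) 1)
    (hD₂ : 0 < D₂) (hD₃ : 0 < D₃) :
    ∃ C₂ : ℝ, 0 < C₂ ∧ ∀ K : ℝ → ℝ → ℝ,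
      Measurable (Function.uncurry K) →
      (∀ s t₁ t₂ : ℝ, 0 < s → s ≤ t₁ → t₁ ≤ t₂ → t₂ ≤ T →
        |K t₂ s - K t₁ s| ≤ D₂ * (t₂ - t₁) ^ H * s ^ (-r)) →
      (∀ s t : ℝ, 0 < s → s < t → t ≤ T →
        0 ≤ K t s ∧ K t s ≤ D₃ * (t - s) ^ (H - 1/2) * s ^ (-r)) →
      ∀ t₁ t₂ : ℝ, T - δ ≤ t₁ → t₁ ≤ t₂ → t₂ ≤ T →
        (∫ s in (0:ℝ)..t₁, (K t₂ s - K t₁ s) ^ 2) + (∫ s in t₁..t₂, (K t₂ s) ^ 2)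
          ≤ C₂ * (t₂ - t₁) ^ (2 * H) := by
  obtain ⟨hr0, hr2⟩ := hr
  obtain ⟨hH1, hH2⟩ := hH
  obtain ⟨hδ0, hδT⟩ := hδ
  have hTδ : 0 < T - δ := by linarith
  have h2r : (0:ℝ) < 1 - 2*r := by linarith
  have hHpos : 0 < H := by linarith
  refine ⟨D₂^2 * T^(1-2*r)/(1-2*r) + D₃^2 * (T-δ)^(-(2*r)) / (2*H), by positivity, ?_⟩
  intro K _hm hLip hGrow t₁ t₂ ht₁ h12 ht₂
  have ht₁pos : 0 < t₁ := lt_of_lt_of_le hTδ ht₁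
  have hd : 0 ≤ t₂ - t₁ := by linarith
  have hdH : ((t₂-t₁)^H)^2 = (t₂-t₁)^(2*H) := by
    rw [← Real.rpow_natCast ((t₂-t₁)^H) 2, ← Real.rpow_mul hd]
    congr 1
    push_cast
    ring
  -- first integral
  have I1 : (∫ s in (0:ℝ)..t₁, (K t₂ s - K t₁ s)^2)
      ≤ D₂^2 * T^(1-2*r)/(1-2*r) * (t₂-t₁)^(2*H) := by
    have hgint : IntegrableOn (fun s => (D₂*(t₂-t₁)^H)^2 * s^(-(2*r)))
        (Set.Ioc 0 t₁) := by
      have := (intervalIntegral.intervalIntegrable_rpow' (a:=0) (b:=t₁)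
        (r := -(2*r)) (by linarith)).const_mul ((D₂*(t₂-t₁)^H)^2)
      rwa [intervalIntegrable_iff_integrableOn_Ioc_of_le ht₁pos.le] at this
    have hmono : ∫ s in Set.Ioc 0 t₁, (K t₂ s - K t₁ s)^2
        ≤ ∫ s in Set.Ioc 0 t₁, (D₂*(t₂-t₁)^H)^2 * s^(-(2*r)) := by
      refine integral_mono_of_nonneg
        (Filter.Eventually.of_forall fun s => sq_nonneg _) hgint ?_
      refine ((ae_restrict_iff' measurableSet_Ioc).2
        (Filter.Eventually.of_forall fun s hs => ?_))
      have hs0 : (0:ℝ) < s := hs.1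
      have h := hLip s t₁ t₂ hs0 hs.2 h12 ht₂
      have hsq : (K t₂ s - K t₁ s)^2 ≤ (D₂*(t₂-t₁)^H * s^(-r))^2 := by
        rw [← sq_abs]
        exact pow_le_pow_left₀ (abs_nonneg _) h 2
      have hsr : (s^(-r))^2 = s^(-(2*r)) := by
        rw [← Real.rpow_natCast (s^(-r)) 2, ← Real.rpow_mul hs0.le]
        congr 1
        push_cast
        ring
      calc (K t₂ s - K t₁ s)^2 ≤ (D₂*(t₂-t₁)^H * s^(-r))^2 := hsq
        _ = (D₂*(t₂-t₁)^H)^2 * s^(-(2*r)) := by rw [mul_pow, hsr]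
    have hcomp : ∫ s in Set.Ioc 0 t₁, (D₂*(t₂-t₁)^H)^2 * s^(-(2*r))
        = (D₂*(t₂-t₁)^H)^2 * (t₁^(1-2*r) / (1-2*r)) := by
      rw [← intervalIntegral.integral_of_le ht₁pos.le,
        intervalIntegral.integral_const_mul,
        integral_rpow (Or.inl (by linarith))]
      have he : -(2*r) + 1 = 1 - 2*r := by ring
      rw [Real.zero_rpow (by linarith), he, sub_zero]
    rw [intervalIntegral.integral_of_le ht₁pos.le]
    refine hmono.trans ?_
    rw [hcomp, mul_pow, hdH]
    have ht₁T : t₁^(1-2*r) ≤ T^(1-2*r) :=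
      Real.rpow_le_rpow ht₁pos.le (by linarith) h2r.le
    calc D₂^2 * (t₂-t₁)^(2*H) * (t₁^(1-2*r) / (1-2*r))
        ≤ D₂^2 * (t₂-t₁)^(2*H) * (T^(1-2*r) / (1-2*r)) := by
          gcongr
      _ = D₂^2 * T^(1-2*r)/(1-2*r) * (t₂-t₁)^(2*H) := by ring
  -- second integral
  have I2 : (∫ s in t₁..t₂, (K t₂ s)^2)
      ≤ D₃^2 * (T-δ)^(-(2*r)) / (2*H) * (t₂-t₁)^(2*H) := by
    have hgint2 : IntegrableOn
        (fun s => D₃^2 * (T-δ)^(-(2*r)) * (t₂-s)^(2*H-1)) (Set.Ioc t₁ t₂) := by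
      have h1 : IntervalIntegrable (fun u : ℝ => u^(2*H-1)) volume 0 (t₂-t₁) :=
        intervalIntegral.intervalIntegrable_rpow' (by linarith)
      have h2 := (h1.comp_sub_left t₂).const_mul (D₃^2 * (T-δ)^(-(2*r)))
      have he : t₂ - (t₂ - t₁) = t₁ := by ring
      rw [sub_zero, he] at h2
      have h3 := h2.symm
      rwa [intervalIntegrable_iff_integrableOn_Ioc_of_le h12] at h3
    have hmono2 : ∫ s in Set.Ioo t₁ t₂, (K t₂ s)^2
        ≤ ∫ s in Set.Ioo t₁ t₂, D₃^2 * (T-δ)^(-(2*r)) * (t₂-s)^(2*H-1) := by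
      refine integral_mono_of_nonneg
        (Filter.Eventually.of_forall fun s => sq_nonneg _)
        (hgint2.mono_set Set.Ioo_subset_Ioc_self) ?_
      refine ((ae_restrict_iff' measurableSet_Ioo).2
        (Filter.Eventually.of_forall fun s hs => ?_))
      have hs0 : (0:ℝ) < s := lt_trans ht₁pos hs.1
      have hst : s < t₂ := hs.2
      obtain ⟨hK0, hKb⟩ := hGrow s t₂ hs0 hst ht₂
      have hsq : (K t₂ s)^2 ≤ (D₃ * (t₂-s)^(H-1/2) * s^(-r))^2 :=
        pow_le_pow_left₀ hK0 hKb 2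
      have hts : (0:ℝ) < t₂ - s := by linarith
      have h1 : ((t₂-s)^(H-1/2))^2 = (t₂-s)^(2*H-1) := by
        rw [← Real.rpow_natCast ((t₂-s)^(H-1/2)) 2, ← Real.rpow_mul hts.le]
        congr 1
        push_cast
        ring
      have h2 : (s^(-r))^2 = s^(-(2*r)) := by
        rw [← Real.rpow_natCast (s^(-r)) 2, ← Real.rpow_mul hs0.le]
        congr 1
        push_cast
        ring
      have h3 : s^(-(2*r)) ≤ (T-δ)^(-(2*r)) :=
        Real.rpow_le_rpow_of_nonpos hTδ (by linarith [hs.1]) (by linarith)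
      calc (K t₂ s)^2 ≤ (D₃ * (t₂-s)^(H-1/2) * s^(-r))^2 := hsq
        _ = D₃^2 * (t₂-s)^(2*H-1) * s^(-(2*r)) := by
            rw [mul_pow, mul_pow, h1, h2]
        _ ≤ D₃^2 * (t₂-s)^(2*H-1) * (T-δ)^(-(2*r)) := by
            gcongr
        _ = D₃^2 * (T-δ)^(-(2*r)) * (t₂-s)^(2*H-1) := by ring
    have hcomp2 : ∫ s in Set.Ioc t₁ t₂, D₃^2 * (T-δ)^(-(2*r)) * (t₂-s)^(2*H-1)
        = D₃^2 * (T-δ)^(-(2*r)) * ((t₂-t₁)^(2*H) / (2*H)) := by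
      rw [← intervalIntegral.integral_of_le h12,
        intervalIntegral.integral_const_mul]
      have := intervalIntegral.integral_comp_sub_left
        (a := t₁) (b := t₂) (fun u : ℝ => u^(2*H-1)) t₂
      have he2 : 2*H - 1 + 1 = 2*H := by ring
      rw [this, sub_self, integral_rpow (Or.inl (by linarith)),
        he2, Real.zero_rpow (by linarith), sub_zero]
    rw [intervalIntegral.integral_of_le h12, integral_Ioc_eq_integral_Ioo]
    refine hmono2.trans ?_
    rw [← integral_Ioc_eq_integral_Ioo, hcomp2]
    exact le_of_eq (by ring)
  rw [add_mul]
  exact add_le_add I1 I2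
end
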